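/- Let T = (V, ≻) be a tournament with top cycle C. Then in every Slater order > of T, every vertex of C precedes (is greater than) every vertex of V∖C. Consequently, the Slater set of T equals the Slater set of the subtournament of T induced on C. -/

import Mathlib

open scoped Classical

variable {V : Type*}

/-- A tournament: an irreflexive relation such that for distinct `u, v`
exactly one of `r u v` and `r v u` holds. -/
def IsTournament (r : V → V → Prop) : Prop :=
  (∀ v, ¬ r v v) ∧ ∀ u v : V, u ≠ v → (r u v ↔ ¬ r v u)

/-- `D` is a dominant set: it is nonempty and every vertex in `D` dominates
every vertex outside `D`. -/
def IsDominant (r : V → V → Prop) (D : Set V) : Prop :=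
  D.Nonempty ∧ ∀ x ∈ D, ∀ y ∉ D, r x y

/-- `C` is the top cycle: the smallest dominant set. -/
def IsTopCycle (r : V → V → Prop) (C : Set V) : Prop :=
  IsDominant r C ∧ ∀ D : Set V, IsDominant r D → C ⊆ D

/-- The Slater score of a strict order `s` w.r.t. the dominance relation `r`. -/
noncomputable def slaterScore {W : Type*} (r s : W → W → Prop) : ℕ :=
  {p : W × W | s p.1 p.2 ∧ r p.1 p.2}.ncard

/-- `s` is a Slater order for the tournament `r`: a strict total order of maximum Slater score. -/
def IsSlaterOrder {W : Type*} (r s : W → W → Prop) : Prop :=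
  IsStrictTotalOrder W s ∧
    ∀ s' : W → W → Prop, IsStrictTotalOrder W s' → slaterScore r s' ≤ slaterScore r s

/-- The Slater set: maximum elements of Slater orders. -/
def slaterSet {W : Type*} (r : W → W → Prop) : Set W :=
  {m | ∃ s : W → W → Prop, IsSlaterOrder r s ∧ ∀ x, x ≠ m → s m x}

/-! Against a dominant set `D` of a tournament, the Slater score of an order splits into its score
inside `D`, its score inside `Dᶜ`, and the number of pairs of `D ×ˢ Dᶜ` it ranks with the vertex of
`D` on top (each such pair is an edge from `D` to `Dᶜ`). Hence stacking `D` above `Dᶜ`, keeping both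
internal orders, never lowers the score, and strictly raises it unless `D` already comes first. So a
Slater order puts the top cycle first and restricts to a Slater order of the subtournament on it;
conversely, a Slater order of the subtournament stacked over one of the complement is a Slater
order of the whole tournament. -/

theorem IsTournament.asymm {r : V → V → Prop} (hT : IsTournament r) {x y : V} (h : r x y) :
    ¬ r y x := by
  by_cases hxy : x = y
  · exact hxy ▸ hT.1 x
  · exact (hT.2 x y hxy).1 h

theorem exists_isSlaterOrder {W : Type*} [Finite W] (r : W → W → Prop) :
    ∃ s, IsSlaterOrder r s := by
  obtain ⟨s, hs, hmax⟩ := Set.exists_max_image {s : W → W → Prop | IsStrictTotalOrder W s}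
    (slaterScore r) (Set.toFinite _)
    ⟨WellOrderingRel, show IsStrictTotalOrder W WellOrderingRel from inferInstance⟩
  exact ⟨s, hs, hmax⟩

instance Subrel.isStrictTotalOrder (s : V → V → Prop) [IsStrictTotalOrder V s] (p : V → Prop) :
    IsStrictTotalOrder _ (Subrel s p) :=
  (Subrel.relEmbedding s p).isStrictTotalOrder

section Stack

variable (D : Set V)

/-- The strict order putting `D`, ordered by `p`, above `Dᶜ`, ordered by `q`. -/
def stackOn (p : D → D → Prop) (q : ↥Dᶜ → ↥Dᶜ → Prop) : V → V → Prop :=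
  (Equiv.Set.sumCompl D).symm ⁻¹'o Sum.Lex p q

variable {D} {p : D → D → Prop} {q : ↥Dᶜ → ↥Dᶜ → Prop}

instance isStrictTotalOrder_stackOn [IsStrictTotalOrder D p] [IsStrictTotalOrder _ q] :
    IsStrictTotalOrder V (stackOn D p q) :=
  haveI : IsStrictTotalOrder _ (Sum.Lex p q) := {}
  (RelIso.preimage _ _).toRelEmbedding.isStrictTotalOrder

theorem stackOn_coe_coe (a b : D) : stackOn D p q a b ↔ p a b := by
  simp [stackOn, Order.Preimage, Equiv.Set.sumCompl_symm_apply]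

theorem subrel_stackOn_mem : Subrel (stackOn D p q) (· ∈ D) = p := by
  ext a b
  exact stackOn_coe_coe a b

theorem subrel_stackOn_compl : Subrel (stackOn D p q) (· ∈ Dᶜ) = q := by
  ext a b
  simp [stackOn, Subrel, Order.Preimage, Equiv.Set.sumCompl_symm_apply_compl]

theorem stackOn_of_mem_of_notMem {x y : V} (hx : x ∈ D) (hy : y ∉ D) : stackOn D p q x y := by
  simp [stackOn, Order.Preimage, Equiv.Set.sumCompl_symm_apply_of_mem hx,
    Equiv.Set.sumCompl_symm_apply_of_notMem hy]

end Stack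

section Score

variable {r : V → V → Prop} {D : Set V}

theorem slaterScore_subrel (s : V → V → Prop) :
    slaterScore (Subrel r (· ∈ D)) (Subrel s (· ∈ D)) =
      ({x : V × V | s x.1 x.2 ∧ r x.1 x.2} ∩ D ×ˢ D).ncard := by
  have hinj : Function.Injective (Prod.map ((↑) : D → V) ((↑) : D → V)) :=
    Subtype.val_injective.prodMap Subtype.val_injective
  rw [slaterScore, ← Set.ncard_image_of_injective _ hinj, show {x : D × D | Subrel s (· ∈ D) x.1 x.2 ∧ Subrel r (· ∈ D) x.1 x.2} =
    Prod.map (↑) (↑) ⁻¹' {x : V × V | s x.1 x.2 ∧ r x.1 x.2} from rfl,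
    Set.image_preimage_eq_inter_range, Set.range_prodMap, Subtype.range_coe]

theorem slaterScore_eq_add [Finite V] (hr : ∀ ⦃x y⦄, r x y → ¬ r y x)
    (hD : ∀ x ∈ D, ∀ y ∉ D, r x y) (s : V → V → Prop) :
    slaterScore r s = slaterScore (Subrel r (· ∈ D)) (Subrel s (· ∈ D)) +
      slaterScore (Subrel r (· ∈ Dᶜ)) (Subrel s (· ∈ Dᶜ)) +
      {x ∈ D ×ˢ Dᶜ | s x.1 x.2}.ncard := by
  rw [slaterScore_subrel, slaterScore_subrel, slaterScore]
  set A := {x : V × V | s x.1 x.2 ∧ r x.1 x.2}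
  have hA : A = (A ∩ D ×ˢ D ∪ A ∩ Dᶜ ×ˢ Dᶜ) ∪ {x ∈ D ×ˢ Dᶜ | s x.1 x.2} := by
    ext ⟨x, y⟩
    by_cases hx : x ∈ D <;> by_cases hy : y ∈ D
    · simp [A, hx, hy]
    · simp [A, hx, hy, hD x hx y hy]
    · simp [A, hx, hy, hr (hD y hy x hx)]
    · simp [A, hx, hy]
  conv_lhs => rw [hA]
  rw [Set.ncard_union_eq, Set.ncard_union_eq]
  all_goals
    rw [Set.disjoint_left]
    rintro ⟨x, y⟩
    simp only [Set.mem_union, Set.mem_inter_iff, Set.mem_prod, Set.mem_compl_iff,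
      Set.mem_ofPred_eq]
    tauto

theorem slaterScore_le_add [Finite V] (hr : ∀ ⦃x y⦄, r x y → ¬ r y x)
    (hD : ∀ x ∈ D, ∀ y ∉ D, r x y) (s : V → V → Prop) :
    slaterScore r s ≤ slaterScore (Subrel r (· ∈ D)) (Subrel s (· ∈ D)) +
      slaterScore (Subrel r (· ∈ Dᶜ)) (Subrel s (· ∈ Dᶜ)) + (D ×ˢ Dᶜ).ncard := by
  rw [slaterScore_eq_add hr hD]
  gcongr
  exacts [Set.toFinite _, Set.sep_subset _ _]

theorem slaterScore_lt_add [Finite V] (hr : ∀ ⦃x y⦄, r x y → ¬ r y x)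
    (hD : ∀ x ∈ D, ∀ y ∉ D, r x y) {s : V → V → Prop} {c v : V} (hc : c ∈ D) (hv : v ∉ D)
    (hcv : ¬ s c v) :
    slaterScore r s < slaterScore (Subrel r (· ∈ D)) (Subrel s (· ∈ D)) +
      slaterScore (Subrel r (· ∈ Dᶜ)) (Subrel s (· ∈ Dᶜ)) + (D ×ˢ Dᶜ).ncard := by
  rw [slaterScore_eq_add hr hD]
  gcongr
  exact Set.ncard_lt_ncard
    ⟨Set.sep_subset _ _, fun h => hcv (h (Set.mk_mem_prod hc hv)).2⟩ (Set.toFinite _)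

theorem slaterScore_eq_add_of_forall [Finite V] (hr : ∀ ⦃x y⦄, r x y → ¬ r y x)
    (hD : ∀ x ∈ D, ∀ y ∉ D, r x y) {s : V → V → Prop} (hs : ∀ x ∈ D, ∀ y ∉ D, s x y) :
    slaterScore r s = slaterScore (Subrel r (· ∈ D)) (Subrel s (· ∈ D)) +
      slaterScore (Subrel r (· ∈ Dᶜ)) (Subrel s (· ∈ Dᶜ)) + (D ×ˢ Dᶜ).ncard := by
  rw [slaterScore_eq_add hr hD, Set.sep_eq_self_iff_mem_true.2 fun x hx => hs _ hx.1 _ hx.2]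

theorem slaterScore_stackOn [Finite V] (hr : ∀ ⦃x y⦄, r x y → ¬ r y x)
    (hD : ∀ x ∈ D, ∀ y ∉ D, r x y) (p : D → D → Prop) (q : ↥Dᶜ → ↥Dᶜ → Prop) :
    slaterScore r (stackOn D p q) = slaterScore (Subrel r (· ∈ D)) p +
      slaterScore (Subrel r (· ∈ Dᶜ)) q + (D ×ˢ Dᶜ).ncard := by
  rw [slaterScore_eq_add_of_forall hr hD fun x hx y hy => stackOn_of_mem_of_notMem hx hy,
    subrel_stackOn_mem, subrel_stackOn_compl]

end Score

namespace IsSlaterOrder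

variable [Finite V] {r s : V → V → Prop} {D : Set V}

theorem rel_of_mem_of_notMem (hr : ∀ ⦃x y⦄, r x y → ¬ r y x) (hD : ∀ x ∈ D, ∀ y ∉ D, r x y)
    (hs : IsSlaterOrder r s) {c v : V} (hc : c ∈ D) (hv : v ∉ D) : s c v := by
  have := hs.1
  by_contra hcv
  have hstack := hs.2 (stackOn D (Subrel s (· ∈ D)) (Subrel s (· ∈ Dᶜ))) inferInstance
  rw [slaterScore_stackOn hr hD] at hstack
  exact hstack.not_gt (slaterScore_lt_add hr hD hc hv hcv)

theorem subrel (hr : ∀ ⦃x y⦄, r x y → ¬ r y x) (hD : ∀ x ∈ D, ∀ y ∉ D, r x y)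
    (hs : IsSlaterOrder r s) : IsSlaterOrder (Subrel r (· ∈ D)) (Subrel s (· ∈ D)) := by
  have := hs.1
  refine ⟨inferInstance, fun t ht => ?_⟩
  have hstack := hs.2 (stackOn D t (Subrel s (· ∈ Dᶜ))) inferInstance
  rwa [slaterScore_stackOn hr hD,
    slaterScore_eq_add_of_forall hr hD fun _ hc _ hv => hs.rel_of_mem_of_notMem hr hD hc hv,
    add_le_add_iff_right, add_le_add_iff_right] at hstack

end IsSlaterOrder

theorem isSlaterOrder_stackOn [Finite V] {r : V → V → Prop} {D : Set V}
    (hr : ∀ ⦃x y⦄, r x y → ¬ r y x) (hD : ∀ x ∈ D, ∀ y ∉ D, r x y)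
    {p : D → D → Prop} {q : ↥Dᶜ → ↥Dᶜ → Prop} (hp : IsSlaterOrder (Subrel r (· ∈ D)) p)
    (hq : IsSlaterOrder (Subrel r (· ∈ Dᶜ)) q) : IsSlaterOrder r (stackOn D p q) := by
  have := hp.1
  have := hq.1
  refine ⟨inferInstance, fun s hs => ?_⟩
  calc slaterScore r s
      ≤ _ := slaterScore_le_add hr hD s
    _ ≤ _ := by gcongr; exacts [hp.2 _ inferInstance, hq.2 _ inferInstance]
    _ = _ := (slaterScore_stackOn hr hD p q).symm

/-- in every Slater order of a tournament, every vertex of the top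
cycle `C` is greater than every vertex outside `C`; consequently the Slater set of
the tournament equals the Slater set of the subtournament induced on `C`. -/
theorem slater_eq_slater_of_topCycle [Fintype V] (r : V → V → Prop)
    (hT : IsTournament r) (C : Set V) (hC : IsTopCycle r C) :
    (∀ s : V → V → Prop, IsSlaterOrder r s → ∀ c ∈ C, ∀ v, v ∉ C → s c v) ∧
    slaterSet r = Subtype.val '' slaterSet (fun a b : C => r (a : V) (b : V)) := by
  have hr : ∀ ⦃x y⦄, r x y → ¬ r y x := fun _ _ => hT.asymm
  have hD := hC.1.2
  have hrel (s) (hs : IsSlaterOrder r s) (c) (hc : c ∈ C) (v) (hv : v ∉ C) : s c v :=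
    hs.rel_of_mem_of_notMem hr hD hc hv
  refine ⟨hrel, Set.ext fun m => ⟨?_, ?_⟩⟩
  · rintro ⟨s, hs, htop⟩
    have := hs.1
    have hm : m ∈ C := by
      obtain ⟨c, hc⟩ := hC.1.1
      by_contra hm
      exact asymm (hrel s hs c hc m hm) (htop c (ne_of_mem_of_not_mem hc hm))
    exact ⟨⟨m, hm⟩, ⟨_, hs.subrel hr hD, fun x hx => htop x (Subtype.coe_ne_coe.2 hx)⟩, rfl⟩
  · rintro ⟨m, ⟨t, ht, htop⟩, rfl⟩
    obtain ⟨q, hq⟩ := exists_isSlaterOrder (Subrel r (· ∈ Cᶜ))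
    refine ⟨stackOn C t q, isSlaterOrder_stackOn hr hD ht hq, fun x hx => ?_⟩
    by_cases hxC : x ∈ C
    · exact (stackOn_coe_coe m ⟨x, hxC⟩).2 (htop _ (Subtype.coe_ne_coe.1 hx))
    · exact stackOn_of_mem_of_notMem m.2 hxC
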